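/- Assume the network satisfies Σ_{y:y∼x}√c(xy) < ∞ for every x∈X⁰. Let α(x):=Σ_{y:y∼x}√c(xy), let v(x)>0 satisfy v(x) ≥ m⁰(x)^{1/4} for all x∈X⁰ and Σ_{x∈X⁰} α(x)/v(x)² < ∞, and define w(xy,t) := v(x)·c(xy)^{1/4} for t∈(0,1/2) and w(xy,t) := v(y)·c(xy)^{1/4} for t∈(1/2,1). Then w(xy,t) ≥ √c(xy) for m¹-a.e. (xy,t)∈X¹, and ‖1/w‖²_{L²(X¹,m¹)} = (1/2)·Σ_{x∈X⁰} α(x)/v(x)² < ∞; in particular 1/w ∈ L²(X¹,m¹). -/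

import Mathlib

open MeasureTheory Set ENNReal

set_option linter.unusedSectionVars false

noncomputable section

/-- A weighted network: countable connected graph without loops or multiple edges,
equipped with positive conductances `c` satisfying `m⁰(x) = ∑_{y∼x} c(xy) < ∞`. -/
structure Network (V : Type) : Type where
  adj : V → V → Prop
  adj_symm : ∀ x y, adj x y → adj y x
  adj_irrefl : ∀ x, ¬ adj x x
  adj_connected : ∀ x y, Relation.ReflTransGen adj x y
  c : V → V → ℝ
  c_symm : ∀ x y, c x y = c y x
  c_pos : ∀ x y, adj x y → 0 < c x y
  c_eq_zero : ∀ x y, ¬ adj x y → c x y = 0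
  c_summable : ∀ x, Summable fun y => c x y

namespace Network

variable {V : Type} [Countable V] [MeasurableSpace V] [DiscreteMeasurableSpace V]

/-- The vertex weight `m⁰(x) = ∑_{y : y ∼ x} c(xy)`. -/
def m0 (N : Network V) (x : V) : ℝ := ∑' y, N.c x y

/-- The measure `m¹` on the metric graph `X¹`.  A point `((x,y),t)` represents the point
at distance `t ∈ (0,1)` from `x` on the edge `[x,y]`; each edge appears with both
orientations, whence the factor `1/2`. -/
def edgeMeasure (N : Network V) : Measure ((V × V) × ℝ) :=
  Measure.sum fun e : V × V =>
    Measure.map (fun t => (e, t))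
      ((ENNReal.ofReal (N.c e.1 e.2 / 2)) • (volume.restrict (Set.Ioo (0:ℝ) 1)))

/-- The identification `(xy,t) ≡ (yx,1-t)` of the two orientations of an edge. -/
def eFlip : (V × V) × ℝ → (V × V) × ℝ := fun p => ((p.1.2, p.1.1), 1 - p.2)

theorem measurable_eFlip : Measurable (eFlip (V := V)) := by
  apply Measurable.prod
  · exact ((measurable_snd.comp measurable_fst).prodMk (measurable_fst.comp measurable_fst))
  · exact measurable_const.sub measurable_snd

theorem measurePreserving_eFlip (N : Network V) :
    MeasurePreserving (eFlip (V := V)) N.edgeMeasure N.edgeMeasure := by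
  refine ⟨measurable_eFlip, ?_⟩
  ext s hs
  rw [Measure.map_apply measurable_eFlip hs, edgeMeasure,
    Measure.sum_apply _ (measurable_eFlip hs), Measure.sum_apply _ hs]
  have key : ∀ e : V × V,
      (Measure.map (fun t => (e, t))
        ((ENNReal.ofReal (N.c e.1 e.2 / 2)) • (volume.restrict (Set.Ioo (0:ℝ) 1))))
          (eFlip ⁻¹' s)
      = (Measure.map (fun t => ((e.2, e.1), t))
        ((ENNReal.ofReal (N.c e.2 e.1 / 2)) • (volume.restrict (Set.Ioo (0:ℝ) 1)))) s := by
    intro e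
    have hme : Measurable fun t : ℝ => (e, t) := measurable_prodMk_left
    have hme' : Measurable fun t : ℝ => ((e.2, e.1), t) := measurable_prodMk_left
    rw [Measure.map_apply hme (measurable_eFlip hs), Measure.map_apply hme' hs,
      Measure.smul_apply, Measure.smul_apply, N.c_symm e.1 e.2]
    congr 1
    have hpre : ((fun t : ℝ => (e, t)) ⁻¹' (eFlip ⁻¹' s))
        = (fun t : ℝ => 1 - t) ⁻¹' ((fun t : ℝ => ((e.2, e.1), t)) ⁻¹' s) := by
      ext t; simp [eFlip]
    rw [hpre]
    have hmp : MeasurePreserving (fun t : ℝ => 1 - t)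
        (volume.restrict (Set.Ioo (0:ℝ) 1)) (volume.restrict (Set.Ioo (0:ℝ) 1)) := by
      have h0 : MeasurePreserving (fun t : ℝ => 1 - t) volume volume :=
        Measure.measurePreserving_sub_left volume 1
      have h1 := h0.restrict_preimage (s := Set.Ioo (0:ℝ) 1) measurableSet_Ioo
      have h2 : (fun t : ℝ => 1 - t) ⁻¹' (Set.Ioo (0:ℝ) 1) = Set.Ioo (0:ℝ) 1 := by
        ext t; constructor <;> (intro ht; simp only [Set.mem_preimage, Set.mem_Ioo] at *; constructor <;> linarith [ht.1, ht.2])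
      rwa [h2] at h1
    exact (hmp.measure_preimage ((hme' hs).nullMeasurableSet)).symm ▸ rfl
  calc
    (∑' e : V × V,
        (Measure.map (fun t => (e, t))
          ((ENNReal.ofReal (N.c e.1 e.2 / 2)) • (volume.restrict (Set.Ioo (0:ℝ) 1))))
            (eFlip ⁻¹' s))
        = ∑' e : V × V,
          (Measure.map (fun t => ((e.2, e.1), t))
            ((ENNReal.ofReal (N.c e.2 e.1 / 2)) • (volume.restrict (Set.Ioo (0:ℝ) 1)))) s :=
      tsum_congr key
    _ = ∑' e : V × V,
          (Measure.map (fun t => (e, t))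
            ((ENNReal.ofReal (N.c e.1 e.2 / 2)) • (volume.restrict (Set.Ioo (0:ℝ) 1)))) s :=
      (Equiv.prodComm V V).tsum_eq fun e =>
        (Measure.map (fun t => (e, t))
          ((ENNReal.ofReal (N.c e.1 e.2 / 2)) • (volume.restrict (Set.Ioo (0:ℝ) 1)))) s

/-- The continuous linear map `F ↦ F ∘ σ` induced by the edge-orientation flip. -/
def flipOp (N : Network V) : Lp ℂ 2 N.edgeMeasure →L[ℂ] Lp ℂ 2 N.edgeMeasure :=
  (Lp.compMeasurePreservingₗᵢ (E := ℂ) (p := 2) ℂ (eFlip (V := V))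
    N.measurePreserving_eFlip).toContinuousLinearMap

/-- The Hilbert space `L²(X¹, m¹)` of square-integrable functions on the metric graph,
realized as the subspace of `L²` functions on oriented edges which are compatible with
the identification `(xy,t) ≡ (yx, 1-t)`. -/
def L2X (N : Network V) : Submodule ℂ (Lp ℂ 2 N.edgeMeasure) :=
  LinearMap.ker ((N.flipOp - ContinuousLinearMap.id ℂ (Lp ℂ 2 N.edgeMeasure) :
    Lp ℂ 2 N.edgeMeasure →ₗ[ℂ] Lp ℂ 2 N.edgeMeasure))

theorem isClosed_L2X (N : Network V) : IsClosed (N.L2X : Set (Lp ℂ 2 N.edgeMeasure)) :=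
  ContinuousLinearMap.isClosed_ker (N.flipOp - ContinuousLinearMap.id ℂ (Lp ℂ 2 N.edgeMeasure))

instance (N : Network V) : CompleteSpace N.L2X :=
  (isClosed_L2X N).completeSpace_coe

end Network

namespace Network

variable {V : Type} [Countable V] [MeasurableSpace V] [DiscreteMeasurableSpace V]

/-- The value of (a representative of) `F ∈ L²(X¹,m¹)` at the point of the edge `[x,y]`
at distance `t` from `x`. -/
def edgeFun (N : Network V) (F : Lp ℂ 2 N.edgeMeasure) (x y : V) (t : ℝ) : ℂ :=
  F ((x, y), t)

/-- The counting measure on vertices weighted by `m⁰`; `ℓ²(X⁰,m⁰) = Lp ℂ 2 N.vertexMeasure`. -/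
def vertexMeasure (N : Network V) : Measure V :=
  Measure.sum fun x => (ENNReal.ofReal (N.m0 x)) • Measure.dirac x

/-- The averaging operator, at the level of functions. -/
def avgFun (N : Network V) (f : V → V → ℝ → ℂ) (x y : V) (t : ℝ) : ℂ :=
  (N.m0 x : ℂ)⁻¹ * (∑' u, (N.c x u : ℂ) * (∫ s in (0:ℝ)..(1 - t), f x u s))
    + (N.m0 y : ℂ)⁻¹ * (∑' v, (N.c y v : ℂ) * (∫ s in (0:ℝ)..t, f y v s))

/-- `f, g, h` are (continuous versions of) an element of `Ĥ²(X¹,m¹)` together with its first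
and second edgewise derivatives: on each edge, `g` is the derivative of `f` and `h` the
derivative of `g` (in the sense of absolutely continuous functions, via the fundamental
theorem of calculus), and `f`, `g`, `h` are square-integrable on the metric graph. -/
structure IsH2Rep (N : Network V) (f g h : V → V → ℝ → ℂ) : Prop where
  ftc₁ : ∀ x y, N.adj x y → ∀ t ∈ Set.Icc (0:ℝ) 1,
    f x y t = f x y 0 + ∫ s in (0:ℝ)..t, g x y s
  ftc₂ : ∀ x y, N.adj x y → ∀ t ∈ Set.Icc (0:ℝ) 1,
    g x y t = g x y 0 + ∫ s in (0:ℝ)..t, h x y s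
  intervalIntegrable_g : ∀ x y, N.adj x y → IntervalIntegrable (g x y) volume 0 1
  intervalIntegrable_h : ∀ x y, N.adj x y → IntervalIntegrable (h x y) volume 0 1
  memL2_f : MemLp (fun p : (V × V) × ℝ => f p.1.1 p.1.2 p.2) 2 N.edgeMeasure
  memL2_g : MemLp (fun p : (V × V) × ℝ => g p.1.1 p.1.2 p.2) 2 N.edgeMeasure
  memL2_h : MemLp (fun p : (V × V) × ℝ => h p.1.1 p.1.2 p.2) 2 N.edgeMeasure

/-- The graph of the operator `S = -d²/dt²` with domain the functions in `Ĥ²(X¹,m¹)` which are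
continuous at the vertices: `(F, G) ∈ graph S` iff `F` has an edgewise `H²` representative
`f` (with derivatives `g`, `h`), `f` is continuous at each vertex, and `G = -f''`. -/
def SGraph (N : Network V) (F G : N.L2X) : Prop :=
  ∃ f g h : V → V → ℝ → ℂ, N.IsH2Rep f g h ∧
    (⇑(F : Lp ℂ 2 N.edgeMeasure) =ᵐ[N.edgeMeasure] fun p => f p.1.1 p.1.2 p.2) ∧
    (∀ x u v, N.adj x u → N.adj x v → f x u 0 = f x v 0) ∧
    (⇑(G : Lp ℂ 2 N.edgeMeasure) =ᵐ[N.edgeMeasure] fun p => -(h p.1.1 p.1.2 p.2))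

/-- The graph of the (Kirchhoff) Laplacian `L`: the restriction of `S` to the functions
satisfying moreover `F'(x) = ∑_{y∼x} c(xy) F'(xy,0+) = 0` at every vertex `x`. -/
def LGraph (N : Network V) (F G : N.L2X) : Prop :=
  ∃ f g h : V → V → ℝ → ℂ, N.IsH2Rep f g h ∧
    (⇑(F : Lp ℂ 2 N.edgeMeasure) =ᵐ[N.edgeMeasure] fun p => f p.1.1 p.1.2 p.2) ∧
    (∀ x u v, N.adj x u → N.adj x v → f x u 0 = f x v 0) ∧
    (∀ x, Summable fun y => (N.c x y : ℂ) * g x y 0) ∧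
    (∀ x, ∑' y, (N.c x y : ℂ) * g x y 0 = 0) ∧
    (⇑(G : Lp ℂ 2 N.edgeMeasure) =ᵐ[N.edgeMeasure] fun p => -(h p.1.1 p.1.2 p.2))

end Network

/-- The graph of the adjoint of a densely defined operator, described by its graph `T`:
`(G,K) ∈ graph T*` iff `⟪G, SF⟫ = ⟪K, F⟫` for all `(F, SF) ∈ T`. -/
def adjointGraph {H : Type*} [NormedAddCommGroup H] [InnerProductSpace ℂ H]
    (T : Set (H × H)) : Set (H × H) :=
  {q | ∀ p ∈ T, (inner ℂ q.1 p.2 : ℂ) = inner ℂ q.2 p.1}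

/-- A densely defined operator given by its graph `T` is self-adjoint if `T* = T`. -/
def IsSelfAdjointGraph {H : Type*} [NormedAddCommGroup H] [InnerProductSpace ℂ H]
    (T : Set (H × H)) : Prop :=
  Dense (Prod.fst '' T) ∧ adjointGraph T = T

/-- The entire function `Φ(z,t) = t` for `z = 0` and `sin(zt)/z` otherwise. -/
def Phi (z : ℂ) (t : ℝ) : ℂ := if z = 0 then (t : ℂ) else Complex.sin (z * t) / z

namespace Network

variable {V : Type} [Countable V] [MeasurableSpace V] [DiscreteMeasurableSpace V]

/-- Iterated forward extension step for the d'Alembert extension: `fwdExt f n x y s`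
represents `F̃(xy, s + n)` for `s ∈ (0,1]`. -/
def fwdExt (N : Network V) (f : V → V → ℝ → ℂ) : ℕ → V → V → ℝ → ℂ
  | 0 => f
  | (n+1) => fun x y s =>
      (2 / (N.m0 y) : ℂ) * ∑' v, (N.c y v : ℂ) * N.fwdExt f n y v s - N.fwdExt f n y x s

/-- Iterated backward extension step for the d'Alembert extension: `bwdExt f n x y s`
represents `F̃(xy, s - n)` for `s ∈ [0,1)`. -/
def bwdExt (N : Network V) (f : V → V → ℝ → ℂ) : ℕ → V → V → ℝ → ℂ
  | 0 => f
  | (n+1) => fun x y s =>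
      (2 / (N.m0 x) : ℂ) * ∑' u, (N.c x u : ℂ) * N.bwdExt f n u x s - N.bwdExt f n y x s

/-- The d'Alembert extension `F̃` of a function `F` on the metric graph: each edge component
`t ↦ F(xy,t)`, `t ∈ [0,1]`, is extended to the whole real line by the recursion
`F̃(xy,t) = (2/m⁰(y)) ∑_{v∼y} c(yv) F̃(yv,t-1) - F̃(yx,t-1)` for `t > 1` and
`F̃(xy,t) = (2/m⁰(x)) ∑_{u∼x} c(ux) F̃(ux,t+1) - F̃(yx,t+1)` for `t < 0`. -/
def tilde (N : Network V) (f : V → V → ℝ → ℂ) (x y : V) (t : ℝ) : ℂ :=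
  if 0 ≤ t ∧ t ≤ 1 then f x y t
  else if 1 < t then N.fwdExt f (⌈t⌉ - 1).toNat x y (t - ((⌈t⌉ - 1 : ℤ) : ℝ))
  else N.bwdExt f (-⌊t⌋).toNat x y (t + ((-⌊t⌋ : ℤ) : ℝ))

/-- The d'Alembert operator `C(τ)` at the level of functions. -/
def dAlembertFun (N : Network V) (f : V → V → ℝ → ℂ) (τ : ℝ) (x y : V) (t : ℝ) : ℂ :=
  (N.tilde f x y (t + τ) + N.tilde f x y (t - τ)) / 2

/-- The squared norm `‖g‖²_{L²(X¹,m¹)} = (1/2) ∑_x ∑_{y} c(xy) ∫₀¹ |g(xy,t)|² dt`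
(with values in `ℝ≥0∞`). -/
def normSq (N : Network V) (g : V → V → ℝ → ℂ) : ℝ≥0∞ :=
  (1/2 : ℝ≥0∞) * ∑' x, ∑' y, ENNReal.ofReal (N.c x y) *
    ∫⁻ t in Set.Ioo (0:ℝ) 1, ((‖g x y t‖₊ : ℝ≥0∞) ^ 2)

end Network

namespace Network

/-- The weight `w(xy,t) = v(x)·c(xy)^{1/4}` for `t < 1/2` and `v(y)·c(xy)^{1/4}` for
`t ≥ 1/2`. -/
def wfun {V : Type} (N : Network V) (v : V → ℝ) (x y : V) (t : ℝ) : ℝ :=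
  if t < 1/2 then v x * (N.c x y) ^ ((1:ℝ)/4) else v y * (N.c x y) ^ ((1:ℝ)/4)

end Network

/-! Since `c(xy) ≤ m⁰(x) ≤ v(x)⁴`, on the half of `[x,y]` next to `x` the weight satisfies
`w = v(x) c(xy)^{1/4} ≥ c(xy)^{1/4} c(xy)^{1/4} = √c(xy)`, and `c(xy) / w² = √c(xy) / v(x)²` there.
So the oriented edge `xy` contributes `(√c(xy)/v(x)² + √c(xy)/v(y)²) / 2` to `‖1/w‖²`, and by the
symmetry `c(xy) = c(yx)` the second halves, summed over all oriented edges, equal the first ones. -/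

namespace Real

lemma rpow_one_div_four_sq {c : ℝ} (hc : 0 ≤ c) : (c ^ ((1:ℝ)/4)) ^ 2 = √c := by
  rw [← rpow_natCast, ← rpow_mul hc, sqrt_eq_rpow]
  norm_num

lemma sqrt_le_mul_rpow_one_div_four {c m a : ℝ} (hc : 0 ≤ c) (hcm : c ≤ m)
    (hm : m ^ ((1:ℝ)/4) ≤ a) : √c ≤ a * c ^ ((1:ℝ)/4) :=
  calc √c = c ^ ((1:ℝ)/4) * c ^ ((1:ℝ)/4) := by rw [← sq, rpow_one_div_four_sq hc]
    _ ≤ a * c ^ ((1:ℝ)/4) :=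
      mul_le_mul_of_nonneg_right ((rpow_le_rpow hc hcm (by norm_num)).trans hm)
        (rpow_nonneg hc _)

lemma mul_sq_inv_mul_rpow_one_div_four {c : ℝ} (hc : 0 ≤ c) (a : ℝ) :
    c * ((a * c ^ ((1:ℝ)/4))⁻¹) ^ 2 = √c / a ^ 2 := by
  rw [mul_inv, mul_pow, inv_pow, inv_pow, rpow_one_div_four_sq hc]
  calc c * ((a ^ 2)⁻¹ * (√c)⁻¹) = c / √c / a ^ 2 := by ring
    _ = √c / a ^ 2 := by rw [div_sqrt]

end Real

lemma enorm_ofReal_inv_sq (r : ℝ) : ‖((r : ℂ))⁻¹‖ₑ ^ 2 = ENNReal.ofReal (r⁻¹ ^ 2) := by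
  rw [← ofReal_norm, ← ENNReal.ofReal_pow (norm_nonneg _), norm_inv, Complex.norm_real,
    Real.norm_eq_abs, inv_pow, sq_abs, inv_pow]

lemma setLIntegral_Ioo_zero_one_ite_lt_half (a b : ℝ≥0∞) :
    ∫⁻ t in Ioo (0:ℝ) 1, (if t < 1/2 then a else b) = (a + b) / 2 := by
  have hdisj : Disjoint (Ioo (0:ℝ) (1/2)) (Ico (1/2) 1) :=
    disjoint_left.2 fun t ht ht' => (not_lt.2 ht'.1) ht.2
  rw [← Ioo_union_Ico_eq_Ioo (b := 1/2) (by norm_num) (by norm_num),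
    lintegral_union measurableSet_Ico hdisj,
    setLIntegral_congr_fun measurableSet_Ioo fun t ht => if_pos ht.2,
    setLIntegral_congr_fun measurableSet_Ico fun t ht => if_neg (not_lt.2 ht.1),
    setLIntegral_const, setLIntegral_const, Real.volume_Ioo, Real.volume_Ico,
    ENNReal.div_eq_inv_mul, mul_add, mul_comm _ a, mul_comm _ b]
  norm_num
  rw [one_div, ENNReal.ofReal_inv_of_pos two_pos, ENNReal.ofReal_ofNat]

lemma ENNReal.tsum_tsum_add_swap_div_two {α : Type*} (f : α → α → ℝ≥0∞) :
    ∑' x, ∑' y, (f x y + f y x) / 2 = ∑' x, ∑' y, f x y := by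
  simp only [ENNReal.add_div]
  simp only [ENNReal.tsum_add, div_eq_mul_inv, ENNReal.tsum_mul_right]
  rw [ENNReal.tsum_comm (f := fun x y => f y x), ← div_eq_mul_inv, ENNReal.add_halves]

namespace Network

variable {V : Type}

lemma c_nonneg (N : Network V) (x y : V) : 0 ≤ N.c x y := by
  by_cases h : N.adj x y
  · exact (N.c_pos x y h).le
  · exact (N.c_eq_zero x y h).ge

lemma ofReal_c_mul_lintegral_inv_wfun_sq (N : Network V) (v : V → ℝ) (x y : V) :
    ENNReal.ofReal (N.c x y) * ∫⁻ t in Ioo (0:ℝ) 1, (‖((N.wfun v x y t)⁻¹ : ℂ)‖₊ : ℝ≥0∞) ^ 2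
      = (ENNReal.ofReal (√(N.c x y) / v x ^ 2) + ENNReal.ofReal (√(N.c x y) / v y ^ 2)) / 2 := by
  have hc := N.c_nonneg x y
  simp only [← enorm_eq_nnnorm, wfun, apply_ite, ite_pow, enorm_ofReal_inv_sq]
  rw [setLIntegral_Ioo_zero_one_ite_lt_half, ← mul_div_assoc, mul_add, ← ENNReal.ofReal_mul hc,
    ← ENNReal.ofReal_mul hc, Real.mul_sq_inv_mul_rpow_one_div_four hc,
    Real.mul_sq_inv_mul_rpow_one_div_four hc]

variable [Countable V] [MeasurableSpace V] [DiscreteMeasurableSpace V]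

lemma c_le_m0 (N : Network V) (x y : V) : N.c x y ≤ N.m0 x :=
  (N.c_summable x).le_tsum y fun z _ => N.c_nonneg x z

lemma sqrt_c_le_wfun (N : Network V) {v : V → ℝ} (hv : ∀ x, N.m0 x ^ ((1:ℝ)/4) ≤ v x)
    (x y : V) (t : ℝ) : √(N.c x y) ≤ N.wfun v x y t := by
  unfold wfun
  split_ifs
  · exact Real.sqrt_le_mul_rpow_one_div_four (N.c_nonneg x y) (N.c_le_m0 x y) (hv x)
  · exact Real.sqrt_le_mul_rpow_one_div_four (N.c_nonneg x y) (N.c_symm x y ▸ N.c_le_m0 y x)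
      (hv y)

lemma measurable_wfun (N : Network V) (v : V → ℝ) :
    Measurable fun p : (V × V) × ℝ => N.wfun v p.1.1 p.1.2 p.2 :=
  Measurable.ite (measurableSet_lt measurable_snd measurable_const)
    ((Measurable.of_discrete (f := fun e : V × V => v e.1 * N.c e.1 e.2 ^ ((1:ℝ)/4))).comp
      measurable_fst)
    ((Measurable.of_discrete (f := fun e : V × V => v e.2 * N.c e.1 e.2 ^ ((1:ℝ)/4))).comp
      measurable_fst)

lemma lintegral_edgeMeasure (N : Network V) (f : (V × V) × ℝ → ℝ≥0∞) :
    ∫⁻ p, f p ∂N.edgeMeasure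
      = ∑' e : V × V, ENNReal.ofReal (N.c e.1 e.2 / 2) * ∫⁻ t in Ioo (0:ℝ) 1, f (e, t) := by
  rw [edgeMeasure, lintegral_sum_measure]
  refine tsum_congr fun e => ?_
  rw [(measurableEmbedding_prodMk_left e).lintegral_map, lintegral_smul_measure]
  rfl

lemma lintegral_enorm_sq_eq_normSq (N : Network V) (g : V → V → ℝ → ℂ) :
    ∫⁻ p, ‖g p.1.1 p.1.2 p.2‖ₑ ^ 2 ∂N.edgeMeasure = N.normSq g := by
  rw [lintegral_edgeMeasure, ENNReal.tsum_prod', normSq, ← ENNReal.tsum_mul_left]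
  refine tsum_congr fun x => ?_
  rw [← ENNReal.tsum_mul_left]
  refine tsum_congr fun y => ?_
  rw [ENNReal.ofReal_div_of_pos two_pos, ENNReal.ofReal_ofNat, ← mul_assoc,
    ENNReal.div_eq_inv_mul, ← one_div]
  rfl

lemma memLp_two_of_normSq_lt_top (N : Network V) {g : V → V → ℝ → ℂ}
    (hg : AEStronglyMeasurable (fun p : (V × V) × ℝ => g p.1.1 p.1.2 p.2) N.edgeMeasure)
    (hfin : N.normSq g < ⊤) : MemLp (fun p : (V × V) × ℝ => g p.1.1 p.1.2 p.2) 2 N.edgeMeasure :=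
  ⟨hg, (eLpNorm_lt_top_iff_lintegral_rpow_enorm_lt_top two_ne_zero ofNat_ne_top).2 (by
    simpa [lintegral_enorm_sq_eq_normSq] using hfin)⟩

lemma normSq_inv_wfun (N : Network V) (v : V → ℝ)
    (hα : ∀ x, Summable fun y => √(N.c x y))
    (hv : Summable fun x => (∑' y, √(N.c x y)) / v x ^ 2) :
    N.normSq (fun x y t => ((N.wfun v x y t)⁻¹ : ℂ))
      = ENNReal.ofReal ((1/2) * ∑' x, (∑' y, √(N.c x y)) / v x ^ 2) := by
  have hedge : ∀ x y, ENNReal.ofReal (N.c x y) *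
      ∫⁻ t in Ioo (0:ℝ) 1, (‖((N.wfun v x y t)⁻¹ : ℂ)‖₊ : ℝ≥0∞) ^ 2
        = (ENNReal.ofReal (√(N.c x y) / v x ^ 2) + ENNReal.ofReal (√(N.c y x) / v y ^ 2)) / 2 :=
    fun x y => by rw [N.c_symm y x, ofReal_c_mul_lintegral_inv_wfun_sq]
  have hrow : ∀ x, ∑' y, ENNReal.ofReal (√(N.c x y) / v x ^ 2)
      = ENNReal.ofReal ((∑' y, √(N.c x y)) / v x ^ 2) := fun x => by
    rw [← ENNReal.ofReal_tsum_of_nonneg (fun y => by positivity) ((hα x).div_const _),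
      tsum_div_const]
  rw [normSq, tsum_congr fun x => tsum_congr (hedge x),
    ENNReal.tsum_tsum_add_swap_div_two fun x y => ENNReal.ofReal (√(N.c x y) / v x ^ 2),
    tsum_congr hrow, ← ENNReal.ofReal_tsum_of_nonneg (fun x => by positivity) hv,
    ENNReal.ofReal_mul (by norm_num), ENNReal.ofReal_div_of_pos two_pos, ENNReal.ofReal_one,
    ENNReal.ofReal_ofNat]

end Network

theorem weight_w_dominates_and_inv_in_L2_general
    {V : Type} [Countable V] [MeasurableSpace V] [DiscreteMeasurableSpace V]
    (N : Network V)
    (hm1 : ∀ x, Summable fun y => Real.sqrt (N.c x y))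
    (v : V → ℝ)
    (hv_ge : ∀ x, (N.m0 x) ^ ((1:ℝ)/4) ≤ v x)
    (hv_sum : Summable fun x => (∑' y, Real.sqrt (N.c x y)) / (v x)^2) :
    (∀ᵐ p ∂N.edgeMeasure, Real.sqrt (N.c p.1.1 p.1.2) ≤ N.wfun v p.1.1 p.1.2 p.2) ∧
    N.normSq (fun x y t => ((N.wfun v x y t)⁻¹ : ℂ))
      = ENNReal.ofReal ((1/2) * ∑' x, (∑' y, Real.sqrt (N.c x y)) / (v x)^2) ∧
    N.normSq (fun x y t => ((N.wfun v x y t)⁻¹ : ℂ)) < ⊤ ∧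
    MemLp (fun p : (V × V) × ℝ => ((N.wfun v p.1.1 p.1.2 p.2)⁻¹ : ℂ)) 2 N.edgeMeasure := by
  have hnormSq := N.normSq_inv_wfun v hm1 hv_sum
  have hfin : N.normSq (fun x y t => ((N.wfun v x y t)⁻¹ : ℂ)) < ⊤ := by
    rw [hnormSq]; exact ENNReal.ofReal_lt_top
  have hmeas : Measurable fun p : (V × V) × ℝ => ((N.wfun v p.1.1 p.1.2 p.2)⁻¹ : ℂ) :=
    (Complex.measurable_ofReal.comp (N.measurable_wfun v)).inv
  exact ⟨.of_forall fun p => N.sqrt_c_le_wfun hv_ge _ _ _, hnormSq, hfin,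
    N.memLp_two_of_normSq_lt_top (g := fun x y t => ((N.wfun v x y t)⁻¹ : ℂ))
      hmeas.aestronglyMeasurable hfin⟩

/-- Assume `∑_{y∼x} √c(xy) < ∞` for every vertex `x`.  Let
`α(x) = ∑_{y∼x} √c(xy)`, let `v(x) > 0` satisfy `v(x) ≥ m⁰(x)^{1/4}` and
`∑_x α(x)/v(x)² < ∞`, and let `w(xy,t) = v(x)·c(xy)^{1/4}` for `t ∈ (0,1/2)` and
`v(y)·c(xy)^{1/4}` for `t ∈ (1/2,1)`.  Then `w(xy,t) ≥ √c(xy)` for `m¹`-a.e. point,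
`‖1/w‖²_{L²(X¹,m¹)} = (1/2) ∑_x α(x)/v(x)² < ∞`, and in particular
`1/w ∈ L²(X¹,m¹)`. -/
theorem weight_w_dominates_and_inv_in_L2
    {V : Type} [Countable V] [MeasurableSpace V] [DiscreteMeasurableSpace V]
    (N : Network V)
    (hm1 : ∀ x, Summable fun y => Real.sqrt (N.c x y))
    (v : V → ℝ) (hv_pos : ∀ x, 0 < v x)
    (hv_ge : ∀ x, (N.m0 x) ^ ((1:ℝ)/4) ≤ v x)
    (hv_sum : Summable fun x => (∑' y, Real.sqrt (N.c x y)) / (v x)^2) :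
    (∀ᵐ p ∂N.edgeMeasure, Real.sqrt (N.c p.1.1 p.1.2) ≤ N.wfun v p.1.1 p.1.2 p.2) ∧
    N.normSq (fun x y t => ((N.wfun v x y t)⁻¹ : ℂ))
      = ENNReal.ofReal ((1/2) * ∑' x, (∑' y, Real.sqrt (N.c x y)) / (v x)^2) ∧
    N.normSq (fun x y t => ((N.wfun v x y t)⁻¹ : ℂ)) < ⊤ ∧
    MemLp (fun p : (V × V) × ℝ => ((N.wfun v p.1.1 p.1.2 p.2)⁻¹ : ℂ)) 2 N.edgeMeasure :=
  weight_w_dominates_and_inv_in_L2_general N hm1 v hv_ge hv_sum
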